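/- Let A be a unital ℂ-algebra with a finite complete family of orthogonal idempotents (e_s)_{s∈I} and φ₀ an involutive anti-automorphism of A fixing the idempotents, and let φ₁ on DDer(A) be defined by φ₁(δ)(a) = (φ₀⊗φ₀)((δ(φ₀(a)))^∘). Then for all δ, Δ ∈ DDer(A) and all a ∈ A, with τ_(13)(x⊗y⊗z) = z⊗y⊗x: ((φ₁(δ)⊗id_A) ∘ φ₁(Δ))(a) = τ_(13)( (φ₀⊗φ₀⊗φ₀)( ((id_A⊗δ) ∘ Δ)(φ₀(a)) ) ) and ((id_A⊗φ₁(Δ)) ∘ φ₁(δ))(a) = τ_(13)( (φ₀⊗φ₀⊗φ₀)( ((Δ⊗id_A) ∘ δ)(φ₀(a)) ) ), where for a linear map θ : A → A⊗A one sets (θ⊗id_A)(d'⊗d'') := θ(d')⊗d'' and (id_A⊗θ)(d'⊗d'') := d'⊗θ(d'') in A^{⊗3}. -/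
import Mathlib


open TensorProduct

noncomputable section

namespace Stmt8

set_option maxHeartbeats 1000000
set_option synthInstance.maxHeartbeats 200000

variable {A : Type*} [Ring A] [Algebra ℂ A]

/-- The flip `(c ⊗ d)^∘ = d ⊗ c` on `A ⊗[ℂ] A`. -/
def flipT : A ⊗[ℂ] A →ₗ[ℂ] A ⊗[ℂ] A := (TensorProduct.comm ℂ A A).toLinearMap

/-- The outer bimodule structure `a ⬝ (d' ⊗ d'') ⬝ b = (a d') ⊗ (d'' b)`. -/
def outerAct (a b : A) : A ⊗[ℂ] A →ₗ[ℂ] A ⊗[ℂ] A :=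
  TensorProduct.map (LinearMap.mulLeft ℂ a) (LinearMap.mulRight ℂ b)

variable {I : Type*} [Fintype I] [DecidableEq I]

/-- `(e s)` is a complete family of orthogonal idempotents. -/
def IsCompleteOrthIdem (e : I → A) : Prop :=
  (∀ s t : I, e s * e t = if s = t then e s else 0) ∧ (∑ s, e s = 1)

/-- `δ` is a double derivation of `A` relative to `A₀ = ⊕ₛ ℂ eₛ`. -/
def IsDoubleDer (e : I → A) (δ : A →ₗ[ℂ] A ⊗[ℂ] A) : Prop :=
  (∀ s : I, δ (e s) = 0) ∧
  ∀ a b : A, δ (a * b) = outerAct 1 b (δ a) + outerAct a 1 (δ b)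

/-- `φ` is an involutive anti-automorphism of `A` fixing the idempotents. -/
def IsAntiInvolution (e : I → A) (φ : A →ₗ[ℂ] A) : Prop :=
  (∀ a b : A, φ (a * b) = φ b * φ a) ∧ (∀ a : A, φ (φ a) = a) ∧ (∀ s : I, φ (e s) = e s)

/-- The induced map `φ₁(δ)(a) = (φ₀ ⊗ φ₀)((δ(φ₀(a)))^∘)` on double derivations. -/
def phi1 (φ : A →ₗ[ℂ] A) (δ : A →ₗ[ℂ] A ⊗[ℂ] A) : A →ₗ[ℂ] A ⊗[ℂ] A :=
  (TensorProduct.map φ φ) ∘ₗ flipT ∘ₗ δ ∘ₗ φ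

/-- For `θ : A → A ⊗ A`, the left extension `(θ ⊗ id)(d' ⊗ d'') = θ(d') ⊗ d''`. -/
def lext (θ : A →ₗ[ℂ] A ⊗[ℂ] A) : A ⊗[ℂ] A →ₗ[ℂ] (A ⊗[ℂ] A) ⊗[ℂ] A :=
  TensorProduct.map θ LinearMap.id

/-- For `θ : A → A ⊗ A`, the right extension `(id ⊗ θ)(d' ⊗ d'') = d' ⊗ θ(d'')`
flattened in `(A ⊗ A) ⊗ A`. -/
def rext (θ : A →ₗ[ℂ] A ⊗[ℂ] A) : A ⊗[ℂ] A →ₗ[ℂ] (A ⊗[ℂ] A) ⊗[ℂ] A :=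
  (TensorProduct.assoc ℂ A A A).symm.toLinearMap ∘ₗ TensorProduct.map LinearMap.id θ

/-- `τ₍₁₂₃₎ : (a₁ ⊗ a₂) ⊗ a₃ ↦ (a₃ ⊗ a₁) ⊗ a₂`. -/
def cyc3 : (A ⊗[ℂ] A) ⊗[ℂ] A →ₗ[ℂ] (A ⊗[ℂ] A) ⊗[ℂ] A :=
  ((TensorProduct.comm ℂ (A ⊗[ℂ] A) A).trans (TensorProduct.assoc ℂ A A A).symm).toLinearMap

/-- `τ₍₁₃₎ : (x ⊗ y) ⊗ z ↦ (z ⊗ y) ⊗ x`. -/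
def tau13 : (A ⊗[ℂ] A) ⊗[ℂ] A →ₗ[ℂ] (A ⊗[ℂ] A) ⊗[ℂ] A :=
  cyc3 ∘ₗ TensorProduct.map flipT LinearMap.id

/-- `φ₀ ⊗ φ₀ ⊗ φ₀` on the triple tensor product. -/
def phi0T3 (φ : A →ₗ[ℂ] A) : (A ⊗[ℂ] A) ⊗[ℂ] A →ₗ[ℂ] (A ⊗[ℂ] A) ⊗[ℂ] A :=
  TensorProduct.map (TensorProduct.map φ φ) φ


lemma key1 (φ : A →ₗ[ℂ] A) (hinv : ∀ a : A, φ (φ a) = a)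
    (δ : A →ₗ[ℂ] A ⊗[ℂ] A) (t : A ⊗[ℂ] A) :
    lext (phi1 φ δ) (TensorProduct.map φ φ (flipT t)) = tau13 (phi0T3 φ (rext δ t)) := by
  induction t using TensorProduct.induction_on with
  | zero => simp
  | tmul x y =>
    simp only [flipT, LinearEquiv.coe_coe, TensorProduct.comm_tmul, TensorProduct.map_tmul,
      lext, rext, LinearMap.comp_apply, TensorProduct.map_tmul, LinearMap.id_coe, id_eq]
    have : phi1 φ δ (φ y) = TensorProduct.map φ φ (flipT (δ y)) := by
      simp [phi1, hinv]
    rw [this]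
    induction δ y using TensorProduct.induction_on with
    | zero => simp [flipT, tau13, cyc3, phi0T3]
    | tmul u v =>
      simp [flipT, tau13, cyc3, phi0T3]
    | add s₁ s₂ h1 h2 =>
      simp only [map_add, TensorProduct.tmul_add, TensorProduct.add_tmul] at *
      rw [h1, h2]
  | add s₁ s₂ h1 h2 =>
    simp only [map_add] at *
    rw [h1, h2]

lemma key2 (φ : A →ₗ[ℂ] A) (hinv : ∀ a : A, φ (φ a) = a)
    (Δ : A →ₗ[ℂ] A ⊗[ℂ] A) (t : A ⊗[ℂ] A) :
    rext (phi1 φ Δ) (TensorProduct.map φ φ (flipT t)) = tau13 (phi0T3 φ (lext Δ t)) := by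
  induction t using TensorProduct.induction_on with
  | zero => simp
  | tmul x y =>
    simp only [flipT, LinearEquiv.coe_coe, TensorProduct.comm_tmul, TensorProduct.map_tmul,
      lext, rext, LinearMap.comp_apply, TensorProduct.map_tmul, LinearMap.id_coe, id_eq]
    have : phi1 φ Δ (φ x) = TensorProduct.map φ φ (flipT (Δ x)) := by
      simp [phi1, hinv]
    rw [this]
    induction Δ x using TensorProduct.induction_on with
    | zero => simp [flipT, tau13, cyc3, phi0T3]
    | tmul u v =>
      simp [flipT, tau13, cyc3, phi0T3]
    | add s₁ s₂ h1 h2 =>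
      simp only [map_add, TensorProduct.tmul_add, TensorProduct.add_tmul] at *
      rw [h1, h2]
  | add s₁ s₂ h1 h2 =>
    simp only [map_add] at *
    rw [h1, h2]

/-- For double derivations `δ, Δ` and all `a ∈ A`:
`((φ₁(δ) ⊗ id) ∘ φ₁(Δ))(a) = τ₍₁₃₎((φ₀⊗φ₀⊗φ₀)(((id ⊗ δ) ∘ Δ)(φ₀ a)))` and
`((id ⊗ φ₁(Δ)) ∘ φ₁(δ))(a) = τ₍₁₃₎((φ₀⊗φ₀⊗φ₀)(((Δ ⊗ id) ∘ δ)(φ₀ a)))`. -/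
theorem phi1_compositions
    (e : I → A) (he : IsCompleteOrthIdem e)
    (φ : A →ₗ[ℂ] A) (hφ : IsAntiInvolution e φ)
    (δ Δ : A →ₗ[ℂ] A ⊗[ℂ] A) (hδ : IsDoubleDer e δ) (hΔ : IsDoubleDer e Δ)
    (a : A) :
    lext (phi1 φ δ) (phi1 φ Δ a) = tau13 (phi0T3 φ (rext δ (Δ (φ a)))) ∧
    rext (phi1 φ Δ) (phi1 φ δ a) = tau13 (phi0T3 φ (lext Δ (δ (φ a)))) := by
  constructor
  · have h : phi1 φ Δ a = TensorProduct.map φ φ (flipT (Δ (φ a))) := by simp [phi1]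
    rw [h, key1 φ hφ.2.1 δ]
  · have h : phi1 φ δ a = TensorProduct.map φ φ (flipT (δ (φ a))) := by simp [phi1]
    rw [h, key2 φ hφ.2.1 Δ]

end Stmt8
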